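/- arXiv:2301.04911 — 3 statements merged into one kernel-verified Lean document; each statement's English description precedes it below -/
import Mathlib

section
/- Let N ≥ 7 be an integer. Then γ₁ is strictly increasing on (0,1), γ₁(t) → −∞ as t → 0⁺, and γ₁(1/2) > 0. Consequently there exists a unique t* ∈ (0,1) with γ₁(t*) = 0; this t* satisfies t* < 1/2, and γ₁(t) > 0 for all t ∈ (t*,1) while γ₁(t) < 0 for all t ∈ (0,t*). -/
open Real Filter Set

/-- `γ₁(t) = (1−t²)^{-(N−2)} − 2·(√3·t)^{-(N−2)} + 2·(t⁴+t²+1)^{-(N−2)/2}`. -/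
noncomputable def gamma1 (N : ℕ) (t : ℝ) : ℝ :=
  (1 - t ^ 2) ^ (-((N : ℝ) - 2)) - 2 * (Real.sqrt 3 * t) ^ (-((N : ℝ) - 2)) +
    2 * (t ^ 4 + t ^ 2 + 1) ^ (-((N : ℝ) - 2) / 2)

private lemma sq_rpow_helper {x : ℝ} (hx : 0 < x) (b : ℝ) :
    x ^ (-b) = (x ^ 2) ^ (-b / 2) := by
  rw [← Real.rpow_natCast x 2, ← Real.rpow_mul hx.le]
  congr 1
  ring

private lemma gamma1_eq (N : ℕ) {t : ℝ} (ht : 0 < t) :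
    gamma1 N t = (1 - t ^ 2) ^ (-((N : ℝ) - 2)) - 2 * (3 * t ^ 2) ^ (-((N : ℝ) - 2) / 2) +
      2 * (t ^ 4 + t ^ 2 + 1) ^ (-((N : ℝ) - 2) / 2) := by
  have h3 : (0:ℝ) < Real.sqrt 3 := Real.sqrt_pos.mpr (by norm_num)
  have hsq : (Real.sqrt 3 * t) ^ 2 = 3 * t ^ 2 := by
    rw [mul_pow, Real.sq_sqrt (by norm_num : (0:ℝ) ≤ 3)]
  rw [gamma1, sq_rpow_helper (mul_pos h3 ht), hsq]

private lemma a_ge (N : ℕ) (hN : 7 ≤ N) : (5:ℝ) ≤ (N : ℝ) - 2 := by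
  have : (7:ℝ) ≤ (N:ℝ) := by exact_mod_cast hN
  linarith

private lemma gamma1_strictMono (N : ℕ) (hN : 7 ≤ N) :
    StrictMonoOn (gamma1 N) (Ioo (0 : ℝ) 1) := by
  set a : ℝ := (N : ℝ) - 2 with ha_def
  have ha : (5:ℝ) ≤ a := a_ge N hN
  have ha0 : 0 < a := by linarith
  have hc0 : 0 < a / 2 := by linarith
  intro s hs t ht hst
  obtain ⟨hs0, hs1⟩ := hs
  obtain ⟨ht0, ht1⟩ := ht
  rw [gamma1_eq N hs0, gamma1_eq N ht0]
  -- F part : (1 - s^2)^(-a) < (1 - t^2)^(-a)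
  have hF : (1 - s ^ 2) ^ (-a) < (1 - t ^ 2) ^ (-a) := by
    apply Real.rpow_lt_rpow_of_neg (by nlinarith) (by nlinarith) (by linarith)
  -- h part : factorization
  have key : ∀ u : ℝ, 0 < u → u < 1 →
      (u ^ 4 + u ^ 2 + 1) ^ (-a / 2)
        = (3 * u ^ 2) ^ (-a / 2) * ((u ^ 4 + u ^ 2 + 1) / (3 * u ^ 2)) ^ (-a / 2) := by
    intro u hu0 hu1
    rw [← Real.mul_rpow (by positivity) (by positivity)]
    congr 1
    field_simp
  have hq1 : ∀ u : ℝ, 0 < u → (1:ℝ) ≤ (u ^ 4 + u ^ 2 + 1) / (3 * u ^ 2) := by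
    intro u hu0
    rw [le_div_iff₀ (by positivity)]
    nlinarith [sq_nonneg (u ^ 2 - 1)]
  have hqlt : (t ^ 4 + t ^ 2 + 1) / (3 * t ^ 2) < (s ^ 4 + s ^ 2 + 1) / (3 * s ^ 2) := by
    rw [div_lt_div_iff₀ (by positivity) (by positivity)]
    have hs2 : s ^ 2 < 1 := by nlinarith
    have ht2 : t ^ 2 < 1 := by nlinarith
    have h1 : 0 < 1 - s ^ 2 * t ^ 2 := by nlinarith [mul_nonneg (sq_nonneg s) (le_of_lt (show 0 < 1 - t ^ 2 by linarith))]
    nlinarith [mul_pos (show 0 < t ^ 2 - s ^ 2 by nlinarith) h1]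
  set qs := (s ^ 4 + s ^ 2 + 1) / (3 * s ^ 2) with hqs_def
  set qt := (t ^ 4 + t ^ 2 + 1) / (3 * t ^ 2) with hqt_def
  have hqt1 : (1:ℝ) ≤ qt := hq1 t ht0
  have hqs1 : (1:ℝ) ≤ qs := hq1 s hs0
  -- B comparison
  have hB : qs ^ (-a / 2) ≤ qt ^ (-a / 2) :=
    (Real.rpow_lt_rpow_of_neg (by linarith) hqlt (by linarith)).le
  have hBt_nonneg : 0 ≤ 1 - qt ^ (-a / 2) := by
    have := Real.rpow_le_one_of_one_le_of_nonpos hqt1 (by linarith : -a / 2 ≤ 0)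
    linarith
  -- A comparison
  have hA : (3 * t ^ 2) ^ (-a / 2) < (3 * s ^ 2) ^ (-a / 2) :=
    Real.rpow_lt_rpow_of_neg (by positivity) (by nlinarith) (by linarith)
  have hAs_pos : (0:ℝ) < (3 * s ^ 2) ^ (-a / 2) := Real.rpow_pos_of_pos (by positivity) _
  have hmul : (3 * t ^ 2) ^ (-a / 2) * (1 - qt ^ (-a / 2))
      ≤ (3 * s ^ 2) ^ (-a / 2) * (1 - qs ^ (-a / 2)) :=
    mul_le_mul hA.le (by linarith) hBt_nonneg hAs_pos.le
  have hhs := key s hs0 hs1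
  have hht := key t ht0 ht1
  rw [hhs, hht]
  nlinarith [hmul, hF]

private lemma gamma1_tendsto (N : ℕ) (hN : 7 ≤ N) :
    Tendsto (gamma1 N) (nhdsWithin 0 (Ioi 0)) atBot := by
  set a : ℝ := (N : ℝ) - 2 with ha_def
  have ha : (5:ℝ) ≤ a := a_ge N hN
  have ha0 : 0 < a := by linarith
  -- the bounded part
  have h1 : Tendsto (fun t : ℝ => (1 - t ^ 2) ^ (-a) + 2 * (t ^ 4 + t ^ 2 + 1) ^ (-a / 2))
      (nhdsWithin 0 (Ioi 0)) (nhds ((1 - 0 ^ 2) ^ (-a) + 2 * (0 ^ 4 + 0 ^ 2 + 1) ^ (-a / 2))) := by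
    apply Tendsto.mono_left _ nhdsWithin_le_nhds
    apply ContinuousAt.tendsto
    apply ContinuousAt.add
    · exact ContinuousAt.rpow_const (by fun_prop) (Or.inl (by norm_num))
    · exact ContinuousAt.mul continuousAt_const
        (ContinuousAt.rpow_const (by fun_prop) (Or.inl (by norm_num)))
  -- the atBot part
  have h2 : Tendsto (fun t : ℝ => (Real.sqrt 3 * t) ^ (-a)) (nhdsWithin 0 (Ioi 0)) atTop := by
    have hmap : Tendsto (fun t : ℝ => Real.sqrt 3 * t) (nhdsWithin 0 (Ioi 0))
        (nhdsWithin 0 (Ioi 0)) := by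
      have h3 : (0:ℝ) < Real.sqrt 3 := Real.sqrt_pos.mpr (by norm_num)
      apply tendsto_nhdsWithin_of_tendsto_nhds_of_eventually_within
      · have hc : Continuous fun t : ℝ => Real.sqrt 3 * t := by fun_prop
        have := hc.tendsto (0:ℝ)
        simpa using this.mono_left nhdsWithin_le_nhds
      · filter_upwards [self_mem_nhdsWithin] with x hx
        exact mul_pos h3 hx
    have hinv : Tendsto (fun x : ℝ => x ^ (-a)) (nhdsWithin 0 (Ioi 0)) atTop := by
      have base : Tendsto (fun x : ℝ => (x ^ a)⁻¹) (nhdsWithin 0 (Ioi 0)) atTop := by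
        apply tendsto_inv_nhdsGT_zero.comp
        apply tendsto_nhdsWithin_of_tendsto_nhds_of_eventually_within
        · have hca : ContinuousAt (fun x : ℝ => x ^ a) 0 :=
            Real.continuousAt_rpow_const 0 a (Or.inr ha0.le)
          have := hca.tendsto.mono_left (nhdsWithin_le_nhds (s := Ioi (0:ℝ)))
          simpa [Real.zero_rpow (ne_of_gt ha0)] using this
        · filter_upwards [self_mem_nhdsWithin] with x hx
          exact Real.rpow_pos_of_pos hx a
      apply base.congr'
      filter_upwards [self_mem_nhdsWithin] with x hx
      rw [Real.rpow_neg (le_of_lt hx)]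
    exact hinv.comp hmap
  have h2' : Tendsto (fun t : ℝ => -2 * (Real.sqrt 3 * t) ^ (-a))
      (nhdsWithin 0 (Ioi 0)) atBot := by
    exact Tendsto.const_mul_atTop_of_neg (show (-2:ℝ) < 0 by norm_num) h2
  have := h1.add_atBot h2'
  apply this.congr
  intro x
  simp only [gamma1]
  ring

private lemma gamma1_half_pos (N : ℕ) (hN : 7 ≤ N) : 0 < gamma1 N (1 / 2) := by
  set a : ℝ := (N : ℝ) - 2 with ha_def
  have ha : (5:ℝ) ≤ a := a_ge N hN
  have heq := gamma1_eq N (show (0:ℝ) < 1/2 by norm_num)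
  rw [← ha_def] at heq
  rw [heq, show (1 - (1/2:ℝ)^2) = 3/4 by norm_num, show (3*((1:ℝ)/2)^2 : ℝ) = 3/4 by norm_num]
  set x : ℝ := (3 / 4 : ℝ) ^ (-a / 2) with hx_def
  have hx_pos : 0 < x := Real.rpow_pos_of_pos (by norm_num) _
  have hxsq : ((3:ℝ) / 4) ^ (-a) = x ^ 2 := by
    rw [hx_def, ← Real.rpow_natCast ((3/4:ℝ) ^ (-a/2)) 2, ← Real.rpow_mul (by norm_num)]
    norm_num
  have hx_gt : 2 < x := by
    have h5 : ((3:ℝ)/4) ^ (-(5:ℝ)) ≤ (3/4:ℝ) ^ (-a) :=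
      Real.rpow_le_rpow_of_exponent_ge (by norm_num) (by norm_num) (by linarith)
    have hval : ((3:ℝ)/4) ^ (-(5:ℝ)) = 1024 / 243 := by
      rw [show (-(5:ℝ)) = ((-5 : ℤ) : ℝ) by norm_num, Real.rpow_intCast]
      norm_num
    have hx2 : (4:ℝ) < x ^ 2 := by
      rw [← hxsq]; rw [hval] at h5; linarith
    nlinarith
  have hthird : 0 < (2:ℝ) * ((1/2:ℝ) ^ 4 + (1/2:ℝ) ^ 2 + 1) ^ (-a / 2) := by
    positivity
  rw [hxsq]
  nlinarith [hthird, hx_gt, hx_pos]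

private lemma gamma1_continuousOn (N : ℕ) :
    ContinuousOn (gamma1 N) (Ioo (0 : ℝ) 1) := by
  apply ContinuousOn.add
  apply ContinuousOn.sub
  · apply ContinuousOn.rpow_const (by fun_prop)
    intro x hx
    left
    nlinarith [hx.1, hx.2]
  · apply ContinuousOn.mul continuousOn_const
    apply ContinuousOn.rpow_const (by fun_prop)
    intro x hx
    left
    have h3 : (0:ℝ) < Real.sqrt 3 := Real.sqrt_pos.mpr (by norm_num)
    exact ne_of_gt (mul_pos h3 hx.1)
  · apply ContinuousOn.mul continuousOn_const
    apply ContinuousOn.rpow_const (by fun_prop)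
    intro x hx
    left
    positivity

theorem stmt_0 (N : ℕ) (hN : 7 ≤ N) :
    StrictMonoOn (gamma1 N) (Ioo (0 : ℝ) 1) ∧
    Tendsto (gamma1 N) (nhdsWithin 0 (Ioi 0)) atBot ∧
    0 < gamma1 N (1 / 2) ∧
    ∃ tstar : ℝ, tstar ∈ Ioo (0 : ℝ) 1 ∧ gamma1 N tstar = 0 ∧
      (∀ s ∈ Ioo (0 : ℝ) 1, gamma1 N s = 0 → s = tstar) ∧
      tstar < 1 / 2 ∧
      (∀ t ∈ Ioo tstar 1, 0 < gamma1 N t) ∧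
      (∀ t ∈ Ioo (0 : ℝ) tstar, gamma1 N t < 0) := by
  have hmono := gamma1_strictMono N hN
  have htend := gamma1_tendsto N hN
  have hhalf := gamma1_half_pos N hN
  refine ⟨hmono, htend, hhalf, ?_⟩
  -- find t₀ ∈ (0, 1/2) with gamma1 N t₀ < 0
  have hev : ∀ᶠ t in nhdsWithin (0:ℝ) (Ioi 0), gamma1 N t < 0 :=
    htend.eventually (eventually_lt_atBot 0)
  have hmem : Ioo (0:ℝ) (1/2) ∈ nhdsWithin (0:ℝ) (Ioi 0) :=
    Ioo_mem_nhdsGT_of_mem (by constructor <;> norm_num)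
  obtain ⟨t₀, ht₀neg, ht₀mem⟩ := (hev.and (eventually_of_mem hmem fun x hx => hx)).exists
  obtain ⟨ht₀0, ht₀half⟩ := ht₀mem
  -- IVT on [t₀, 1/2]
  have hsub : Icc t₀ (1/2 : ℝ) ⊆ Ioo (0:ℝ) 1 := fun x hx =>
    ⟨lt_of_lt_of_le ht₀0 hx.1, lt_of_le_of_lt hx.2 (by norm_num)⟩
  have hcont : ContinuousOn (gamma1 N) (Icc t₀ (1/2 : ℝ)) :=
    (gamma1_continuousOn N).mono hsub
  have hivt := intermediate_value_Ioo (le_of_lt ht₀half) hcont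
  have h0mem : (0:ℝ) ∈ Ioo (gamma1 N t₀) (gamma1 N (1/2)) := ⟨ht₀neg, hhalf⟩
  obtain ⟨tstar, htstar_mem, htstar_eq⟩ := hivt h0mem
  have htstar01 : tstar ∈ Ioo (0:ℝ) 1 :=
    ⟨lt_trans ht₀0 htstar_mem.1, lt_trans htstar_mem.2 (by norm_num)⟩
  refine ⟨tstar, htstar01, htstar_eq, ?_, htstar_mem.2, ?_, ?_⟩
  · intro s hs hs0
    exact hmono.injOn hs htstar01 (by rw [hs0, htstar_eq])
  · intro t ht
    have ht01 : t ∈ Ioo (0:ℝ) 1 := ⟨lt_trans htstar01.1 ht.1, ht.2⟩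
    have := hmono htstar01 ht01 ht.1
    rw [htstar_eq] at this
    exact this
  · intro t ht
    have ht01 : t ∈ Ioo (0:ℝ) 1 := ⟨ht.1, lt_trans ht.2 htstar01.2⟩
    have := hmono ht01 htstar01 ht.2
    rw [htstar_eq] at this
    exact this
end

section
/- Let N ≥ 7 be an integer and define f(T) = 3T·(1 − (T/(1+T))^{(N−2)/2})² for T > 0. Then f is strictly increasing on the interval ((√3−1)/2, 1), and f(T) > 3·((√3−1)/2)·(1 − (((√3−1)/2)/(1+(√3−1)/2))^{5/2})² > 1 for every T ∈ ((√3−1)/2, 1). -/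
open Real Filter Set

lemma s3lb : (1.7320508 : ℝ) < Real.sqrt 3 := (Real.lt_sqrt (by norm_num)).2 (by norm_num)
lemma s3ub : Real.sqrt 3 < 1.7320509 := (Real.sqrt_lt' (by norm_num)).2 (by norm_num)
lemma s2lb : (1.4142135 : ℝ) < Real.sqrt 2 := (Real.lt_sqrt (by norm_num)).2 (by norm_num)
lemma s2ub : Real.sqrt 2 < 1.4142136 := (Real.sqrt_lt' (by norm_num)).2 (by norm_num)
lemma s6lb : (2.4494897 : ℝ) < Real.sqrt 6 := (Real.lt_sqrt (by norm_num)).2 (by norm_num)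
lemma s6ub : Real.sqrt 6 < 2.4494898 := (Real.sqrt_lt' (by norm_num)).2 (by norm_num)



lemma base_eq : ((Real.sqrt 3 - 1) / 2) / (1 + (Real.sqrt 3 - 1) / 2) = 2 - Real.sqrt 3 := by
  have h3 : Real.sqrt 3 ^ 2 = 3 := Real.sq_sqrt (by norm_num)
  have h1 : (1 : ℝ) + (Real.sqrt 3 - 1) / 2 = (Real.sqrt 3 + 1)/2 := by ring
  have hne : ((Real.sqrt 3 + 1)/2 : ℝ) ≠ 0 := by nlinarith [s3lb]
  rw [h1, div_eq_iff hne]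
  linear_combination h3/2

lemma sqrt_base : Real.sqrt (2 - Real.sqrt 3) = (Real.sqrt 6 - Real.sqrt 2) / 2 := by
  have h62 : Real.sqrt 6 * Real.sqrt 2 = 2 * Real.sqrt 3 := by
    rw [← Real.sqrt_mul (by norm_num), show (6:ℝ)*2 = 2^2*3 by norm_num,
      Real.sqrt_mul (by positivity), Real.sqrt_sq (by norm_num)]
  have : (2 : ℝ) - Real.sqrt 3 = ((Real.sqrt 6 - Real.sqrt 2) / 2) ^ 2 := by
    have h6 : Real.sqrt 6 ^ 2 = 6 := Real.sq_sqrt (by norm_num)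
    have h2 : Real.sqrt 2 ^ 2 = 2 := Real.sq_sqrt (by norm_num)
    nlinarith
  rw [this, Real.sqrt_sq (by nlinarith [s6lb, s2ub])]

lemma pow52 : (2 - Real.sqrt 3) ^ ((5:ℝ)/2) = (7 - 4 * Real.sqrt 3) * ((Real.sqrt 6 - Real.sqrt 2) / 2) := by
  have hpos : (0:ℝ) < 2 - Real.sqrt 3 := by nlinarith [s3ub]
  have h52 : ((5:ℝ)/2) = (2:ℕ) + (1:ℝ)/2 := by norm_num
  rw [h52, Real.rpow_add hpos, Real.rpow_natCast, ← Real.sqrt_eq_rpow, sqrt_base]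
  have h3 : Real.sqrt 3 ^ 2 = 3 := Real.sq_sqrt (by norm_num)
  linear_combination ((Real.sqrt 6 - Real.sqrt 2)/2) * h3

lemma const_gt_one : 1 < 3 * ((Real.sqrt 3 - 1) / 2) *
    (1 - (((Real.sqrt 3 - 1) / 2) / (1 + (Real.sqrt 3 - 1) / 2)) ^ ((5 : ℝ) / 2)) ^ 2 := by
  rw [base_eq, pow52]
  set s3 := Real.sqrt 3
  set t := (7 - 4 * s3) * ((Real.sqrt 6 - Real.sqrt 2) / 2) with ht
  have h1 : t < 0.03717 := by
    have := s3lb; have := s3ub; have := s2lb; have := s2ub; have := s6lb; have := s6ub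
    nlinarith
  have h2 : 0 < t := by
    have := s3ub; have := s2ub; have := s6lb
    nlinarith
  have := s3lb
  nlinarith


lemma key_ind (n : ℕ) (hn : 5 ≤ n) :
    (n : ℝ) ≤ (Real.sqrt 3 + 1) / 2 * (Real.sqrt 2 ^ n - 1) := by
  induction n, hn using Nat.le_induction with
  | base =>
    have h2 : Real.sqrt 2 ^ 2 = 2 := Real.sq_sqrt (by norm_num)
    have h5 : Real.sqrt 2 ^ 5 = 4 * Real.sqrt 2 := by
      linear_combination (Real.sqrt 2 ^ 3 + 2 * Real.sqrt 2) * h2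
    rw [h5]
    nlinarith [s2lb, s3lb]
  | succ n hn ih =>
    have hP : (1:ℝ) ≤ Real.sqrt 2 ^ n := one_le_pow₀ (by nlinarith [s2lb])
    have hn' : (5:ℝ) ≤ (n:ℝ) := by exact_mod_cast hn
    have hmul : Real.sqrt 2 * (n:ℝ) ≤ Real.sqrt 2 * ((Real.sqrt 3 + 1) / 2 * (Real.sqrt 2 ^ n - 1)) :=
      mul_le_mul_of_nonneg_left ih (Real.sqrt_nonneg 2)
    rw [pow_succ]
    push_cast
    nlinarith [s2lb, s3lb, hP]

lemma mono_ico (N : ℕ) (hN : 7 ≤ N) :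
    StrictMonoOn (fun T : ℝ => 3 * T * (1 - (T / (1 + T)) ^ (((N : ℝ) - 2) / 2)) ^ 2)
      (Ico ((Real.sqrt 3 - 1) / 2) 1) := by
  set a : ℝ := (Real.sqrt 3 - 1) / 2 with ha
  set α : ℝ := ((N : ℝ) - 2) / 2 with hα
  have ha0 : 0 < a := by rw [ha]; nlinarith [s3lb]
  have hα52 : (5:ℝ)/2 ≤ α := by
    rw [hα]
    have : (7:ℝ) ≤ (N:ℝ) := by exact_mod_cast hN
    linarith
  have hαpos : 0 < α := by linarith
  -- the exponent identity : 2^α = √2 ^ (N-2)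
  have hm : ((N:ℝ) - 2) = ((N - 2 : ℕ) : ℝ) := by
    have : (2:ℕ) ≤ N := by omega
    push_cast [Nat.cast_sub this]
    ring
  have h2α : (2:ℝ) ^ α = Real.sqrt 2 ^ (N - 2 : ℕ) := by
    rw [hα, hm, show (((N - 2 : ℕ) : ℝ))/2 = (1/2) * ((N - 2 : ℕ) : ℝ) by ring,
      Real.rpow_mul (by norm_num), ← Real.sqrt_eq_rpow, Real.rpow_natCast]
  have hkey : ((N - 2 : ℕ) : ℝ) ≤ (Real.sqrt 3 + 1) / 2 * ((2:ℝ) ^ α - 1) := by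
    rw [h2α]; exact key_ind _ (by omega)
  apply strictMonoOn_of_deriv_pos (convex_Ico a 1)
  · -- continuity
    apply ContinuousOn.mul
    · exact continuousOn_const.mul continuousOn_id
    · apply ContinuousOn.pow
      apply ContinuousOn.sub continuousOn_const
      apply ContinuousOn.rpow_const
      · apply ContinuousOn.div continuousOn_id (by fun_prop)
        intro x hx
        have hax : a ≤ x := hx.1
        intro h; nlinarith [ha0]
      · intro x hx
        left
        have hax : a ≤ x := hx.1
        have hx0 : 0 < x := lt_of_lt_of_le ha0 hax
        have h1x : 0 < 1 + x := by linarith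
        positivity
  · rw [interior_Ico]
    intro x hx
    obtain ⟨hxa, hx1⟩ := hx
    have hx0 : 0 < x := lt_trans ha0 hxa
    have h1x : 0 < 1 + x := by linarith
    have hden : (1:ℝ) + x ≠ 0 := ne_of_gt h1x
    set u : ℝ := x / (1 + x) with hu
    have hu0 : 0 < u := div_pos hx0 h1x
    have hu12 : u < 1/2 := by rw [hu, div_lt_iff₀ h1x]; linarith
    have hu1 : u < 1 := by linarith
    set g : ℝ := u ^ α with hg
    have hg1 : g < 1 := Real.rpow_lt_one hu0.le hu1 hαpos
    have hg0 : 0 < g := Real.rpow_pos_of_pos hu0 α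
    -- derivative of inner function
    have hduv : HasDerivAt (fun T : ℝ => T / (1 + T))
        ((1 * (1 + x) - x * (0 + 1)) / (1 + x) ^ 2) x :=
      (hasDerivAt_id x).div ((hasDerivAt_const x 1).add (hasDerivAt_id x)) hden
    have hrp : HasDerivAt (fun y : ℝ => y ^ α) (α * u ^ (α - 1)) u :=
      Real.hasDerivAt_rpow_const (Or.inl (ne_of_gt hu0))
    have hgd : HasDerivAt (fun T : ℝ => (T / (1 + T)) ^ α)
        (α * u ^ (α - 1) * ((1 * (1 + x) - x * (0 + 1)) / (1 + x) ^ 2)) x :=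
      by have := HasDerivAt.comp (h₂ := fun y : ℝ => y ^ α) x hrp hduv; exact this
    have h3T : HasDerivAt (fun T : ℝ => 3 * T) (0 * x + 3 * 1) x :=
      (hasDerivAt_const x 3).mul (hasDerivAt_id x)
    have hsq : HasDerivAt (fun T : ℝ => (1 - (T / (1 + T)) ^ α) ^ 2)
        ((2:ℕ) * (1 - u ^ α) ^ 1 * (0 - α * u ^ (α - 1) * ((1 * (1 + x) - x * (0 + 1)) / (1 + x) ^ 2))) x := by
      have := ((hasDerivAt_const x 1).sub hgd).pow 2
      simpa [Pi.sub_def, Pi.pow_def, ← hu] using this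
    have hf : HasDerivAt (fun T : ℝ => 3 * T * (1 - (T / (1 + T)) ^ α) ^ 2)
        ((0 * x + 3 * 1) * (1 - u ^ α) ^ 2 +
          3 * x * ((2:ℕ) * (1 - u ^ α) ^ 1 * (0 - α * u ^ (α - 1) * ((1 * (1 + x) - x * (0 + 1)) / (1 + x) ^ 2)))) x := by
      have := h3T.mul hsq
      simpa [Pi.mul_def, ← hu] using this
    rw [hf.deriv]
    -- rewrite u^(α-1)
    have hum : u ^ (α - 1) = g * (1 + x) / x := by
      rw [hg, Real.rpow_sub hu0, Real.rpow_one, hu]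
      field_simp
    rw [hum]
    -- key inequality
    have hbr : g * (1 + x + 2 * α) < 1 + x := by
      have hgu : g < ((2:ℝ) ^ α)⁻¹ := by
        have := Real.rpow_lt_rpow hu0.le hu12 hαpos
        rwa [show ((1:ℝ)/2) = (2:ℝ)⁻¹ by norm_num, Real.inv_rpow (by norm_num)] at this
      have h2a1 : (1:ℝ) ≤ (2:ℝ) ^ α := Real.one_le_rpow (by norm_num) hαpos.le
      have hca : (Real.sqrt 3 + 1) / 2 < 1 + x := by
        rw [ha] at hxa; linarith
      have hNm : ((N - 2 : ℕ) : ℝ) = 2 * α := by rw [hα, ← hm]; ring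
      have hkey2 : 2 * α ≤ (1 + x) * ((2:ℝ) ^ α - 1) := by
        rw [← hNm]
        calc ((N - 2 : ℕ) : ℝ) ≤ (Real.sqrt 3 + 1) / 2 * ((2:ℝ) ^ α - 1) := hkey
          _ ≤ (1 + x) * ((2:ℝ) ^ α - 1) := by
              apply mul_le_mul_of_nonneg_right hca.le (by linarith)
      have h2apos : (0:ℝ) < (2:ℝ) ^ α := Real.rpow_pos_of_pos (by norm_num) α
      calc g * (1 + x + 2 * α) < ((2:ℝ) ^ α)⁻¹ * (1 + x + 2 * α) := by
            apply mul_lt_mul_of_pos_right hgu (by linarith)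
        _ ≤ 1 + x := by
            rw [inv_mul_le_iff₀ h2apos]
            nlinarith [hkey2]
    -- final positivity
    have hexpand : (0 * x + 3 * 1) * (1 - u ^ α) ^ 2 +
          3 * x * ((2:ℕ) * (1 - u ^ α) ^ 1 * (0 - α * (g * (1 + x) / x) * ((1 * (1 + x) - x * (0 + 1)) / (1 + x) ^ 2)))
        = 3 * (1 - g) * ((1 + x) - g * (1 + x + 2 * α)) / (1 + x) := by
      rw [← hg]
      field_simp
      ring
    rw [hexpand]
    exact div_pos (mul_pos (mul_pos (by norm_num) (by linarith)) (by linarith)) h1x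

theorem stmt_12 (N : ℕ) (hN : 7 ≤ N) :
    StrictMonoOn (fun T : ℝ => 3 * T * (1 - (T / (1 + T)) ^ (((N : ℝ) - 2) / 2)) ^ 2)
      (Ioo ((Real.sqrt 3 - 1) / 2) 1) ∧
    (∀ T ∈ Ioo ((Real.sqrt 3 - 1) / 2) (1 : ℝ),
      3 * ((Real.sqrt 3 - 1) / 2) *
          (1 - (((Real.sqrt 3 - 1) / 2) / (1 + (Real.sqrt 3 - 1) / 2)) ^ ((5 : ℝ) / 2)) ^ 2 <
        3 * T * (1 - (T / (1 + T)) ^ (((N : ℝ) - 2) / 2)) ^ 2) ∧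
    1 < 3 * ((Real.sqrt 3 - 1) / 2) *
          (1 - (((Real.sqrt 3 - 1) / 2) / (1 + (Real.sqrt 3 - 1) / 2)) ^ ((5 : ℝ) / 2)) ^ 2 := by
  have hmono := mono_ico N hN
  refine ⟨hmono.mono Ioo_subset_Ico_self, ?_, const_gt_one⟩
  intro T hT
  set a : ℝ := (Real.sqrt 3 - 1) / 2 with ha
  have ha0 : 0 < a := by rw [ha]; nlinarith [s3lb]
  have hα52 : (5:ℝ)/2 ≤ ((N : ℝ) - 2) / 2 := by
    have : (7:ℝ) ≤ (N:ℝ) := by exact_mod_cast hN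
    linarith
  have hfa : 3 * a * (1 - (a / (1 + a)) ^ (((N : ℝ) - 2) / 2)) ^ 2 <
      3 * T * (1 - (T / (1 + T)) ^ (((N : ℝ) - 2) / 2)) ^ 2 :=
    hmono (left_mem_Ico.2 (by nlinarith [s3ub])) ⟨hT.1.le, hT.2⟩ hT.1
  refine lt_of_le_of_lt ?_ hfa
  have hx0 : a / (1 + a) = 2 - Real.sqrt 3 := base_eq
  rw [hx0]
  have hb0 : (0:ℝ) < 2 - Real.sqrt 3 := by nlinarith [s3ub]
  have hb1 : (2:ℝ) - Real.sqrt 3 ≤ 1 := by nlinarith [s3lb]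
  have hle : (2 - Real.sqrt 3) ^ (((N : ℝ) - 2) / 2) ≤ (2 - Real.sqrt 3) ^ ((5:ℝ)/2) :=
    Real.rpow_le_rpow_of_exponent_ge hb0 hb1 hα52
  have h52le1 : (2 - Real.sqrt 3) ^ ((5:ℝ)/2) ≤ 1 := Real.rpow_le_one hb0.le hb1 (by norm_num)
  have hsq : (1 - (2 - Real.sqrt 3) ^ ((5:ℝ)/2)) ^ 2 ≤ (1 - (2 - Real.sqrt 3) ^ (((N : ℝ) - 2) / 2)) ^ 2 := by
    apply pow_le_pow_left₀ (by linarith) (by linarith)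
  nlinarith [hsq, ha0]
end

section
/- Let N ≥ 7 be an integer. Then for every t ∈ ((√6−√2)/2, 1), setting T = t²/(1−t²), one has (T^N + 3T)·(1 − t^{N−2})² > 1. -/
open Real Filter Set

lemma keyA (t : ℝ) (h0 : 0 < t) (h1 : (267949:ℝ)/1000000 < t^2) (h2 : t ≤ 85/100) :
    3*t^2*(1 - t^5)^2 > 1 - t^2 := by
  have ht1 : t ≤ 1 := le_trans h2 (by norm_num)
  have ht5 : t^5 ≤ 1 := pow_le_one₀ h0.le ht1
  rcases le_or_gt t (2697/5000) with h | h
  · have hb5 : t^5 ≤ ((2697:ℝ)/5000)^5 := pow_le_pow_left₀ h0.le h 5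
    have hs : ((1:ℝ) - (2697/5000)^5)^2 ≤ (1 - t^5)^2 := by nlinarith [hb5, ht5]
    nlinarith [h1, mul_le_mul_of_nonneg_left hs (sq_nonneg t)]
  · rcases le_or_gt t (6293/10000) with h' | h'
    · have hb5 : t^5 ≤ ((6293:ℝ)/10000)^5 := pow_le_pow_left₀ h0.le h' 5
      have hs : ((1:ℝ) - (6293/10000)^5)^2 ≤ (1 - t^5)^2 := by nlinarith [hb5, ht5]
      nlinarith [sq_nonneg (t - 2697/5000), h, mul_le_mul_of_nonneg_left hs (sq_nonneg t)]
    · rcases le_or_gt t (779/1000) with h'' | h''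
      · have hb5 : t^5 ≤ ((779:ℝ)/1000)^5 := pow_le_pow_left₀ h0.le h'' 5
        have hs : ((1:ℝ) - (779/1000)^5)^2 ≤ (1 - t^5)^2 := by nlinarith [hb5, ht5]
        nlinarith [sq_nonneg (t - 6293/10000), h', mul_le_mul_of_nonneg_left hs (sq_nonneg t)]
      · have hb5 : t^5 ≤ ((85:ℝ)/100)^5 := pow_le_pow_left₀ h0.le h2 5
        have hs : ((1:ℝ) - (85/100)^5)^2 ≤ (1 - t^5)^2 := by nlinarith [hb5, ht5]
        nlinarith [sq_nonneg (t - 779/1000), h'', mul_le_mul_of_nonneg_left hs (sq_nonneg t)]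

lemma core (N : ℕ) (hN : 7 ≤ N) (t : ℝ) (h0 : 0 < t) (h1 : t < 1)
    (ha : (267949:ℝ)/1000000 < t^2) :
    ((t^2/(1-t^2))^N + 3*(t^2/(1-t^2)))*(1 - t^(N-2))^2 > 1 := by
  obtain ⟨m, hNm, hm⟩ : ∃ m, N - 2 = m ∧ 5 ≤ m := ⟨N - 2, rfl, by omega⟩
  have hN2 : N = m + 2 := by omega
  rw [hNm]
  have h1t2 : 0 < 1 - t^2 := by nlinarith
  have htm1 : t^m < 1 := pow_lt_one₀ h0.le h1 (by omega)
  have htm0 : 0 < t^m := pow_pos h0 m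
  rcases le_or_gt t (85/100) with hc | hc
  · -- small t: use the 3T term
    have key := keyA t h0 ha hc
    have htm5 : t^m ≤ t^5 := pow_le_pow_of_le_one h0.le h1.le hm
    have ht51 : t^5 ≤ 1 := pow_le_one₀ h0.le h1.le
    have hs : (1 - t^5)^2 ≤ (1 - t^m)^2 := by nlinarith
    have e1 : 3*(t^2/(1-t^2))*(1-t^5)^2 > 1 := by
      have heq : 3*(t^2/(1-t^2))*(1-t^5)^2 = (3*t^2*(1-t^5)^2)/(1-t^2) := by ring
      rw [gt_iff_lt, heq, lt_div_iff₀ h1t2]; linarith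
    have e2 : 3*(t^2/(1-t^2))*(1-t^5)^2 ≤ 3*(t^2/(1-t^2))*(1-t^m)^2 := by
      apply mul_le_mul_of_nonneg_left hs; positivity
    have e3 : 0 ≤ (t^2/(1-t^2))^N * (1-t^m)^2 := by positivity
    nlinarith [e1, e2, e3]
  · -- large t: use the T^N term
    have hu0 : 0 < 1 - t := by linarith
    have hu15 : 1 - t ≤ 3/20 := by linarith
    have ht2 : (289:ℝ)/400 ≤ t^2 := by nlinarith
    have hT : t^2/(2*(1-t)) ≤ t^2/(1-t^2) := by
      apply div_le_div_of_nonneg_left (sq_nonneg t) h1t2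
      nlinarith
    have hTN : (t^2/(2*(1-t)))^N ≤ (t^2/(1-t^2))^N := pow_le_pow_left₀ (by positivity) hT N
    have htm : t^m ≤ t := pow_le_of_le_one h0.le h1.le (by omega)
    have hsq : (1-t)^2 ≤ (1 - t^m)^2 := by nlinarith
    -- numeric core
    have hnum : (2*(1-t))^N < (t^2)^N * (1-t)^2 := by
      have hE : ((289:ℝ)/120)^5 ≤ ((289:ℝ)/120)^m := pow_le_pow_right₀ (by norm_num) hm
      have hA : (2*(1-t))^m ≤ ((3:ℝ)/10)^m := pow_le_pow_left₀ (by linarith) (by linarith) m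
      have hC : ((289:ℝ)/400)^m ≤ (t^2)^m := pow_le_pow_left₀ (by norm_num) ht2 m
      have hC2 : ((289:ℝ)/400)^2 ≤ (t^2)^2 := pow_le_pow_left₀ (by norm_num) ht2 2
      have hB0 : (0:ℝ) < ((3:ℝ)/10)^m := by positivity
      have hD : ((289:ℝ)/400)^m = ((289:ℝ)/120)^m * ((3:ℝ)/10)^m := by
        rw [← mul_pow]; norm_num
      calc (2*(1-t))^N = (2*(1-t))^m * (2*(1-t))^2 := by rw [hN2, pow_add]
        _ ≤ ((3:ℝ)/10)^m * (2*(1-t))^2 := by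
            apply mul_le_mul_of_nonneg_right hA (by positivity)
        _ = 4 * (((3:ℝ)/10)^m * (1-t)^2) := by ring
        _ < (((289:ℝ)/120)^5 * ((289:ℝ)/400)^2) * (((3:ℝ)/10)^m * (1-t)^2) := by
            apply mul_lt_mul_of_pos_right (by norm_num) (by positivity)
        _ ≤ (((289:ℝ)/120)^m * ((289:ℝ)/400)^2) * (((3:ℝ)/10)^m * (1-t)^2) := by
            apply mul_le_mul_of_nonneg_right _ (by positivity)
            apply mul_le_mul_of_nonneg_right hE (by positivity)
        _ = (((289:ℝ)/400)^m * ((289:ℝ)/400)^2) * (1-t)^2 := by rw [hD]; ring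
        _ ≤ ((t^2)^m * (t^2)^2) * (1-t)^2 := by
            apply mul_le_mul_of_nonneg_right _ (by positivity)
            apply mul_le_mul hC hC2 (by positivity) (by positivity)
        _ = (t^2)^N * (1-t)^2 := by rw [hN2, pow_add]
    have hb : 1 < (t^2/(2*(1-t)))^N * (1-t)^2 := by
      rw [div_pow, div_mul_eq_mul_div, lt_div_iff₀ (by positivity), one_mul]
      exact hnum
    have h2' : (t^2/(2*(1-t)))^N * (1-t)^2 ≤ (t^2/(1-t^2))^N * (1-t^m)^2 := by
      apply mul_le_mul hTN hsq (by positivity) (by positivity)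
    have h3' : 0 ≤ 3*(t^2/(1-t^2))*(1-t^m)^2 := by positivity
    nlinarith [hb, h2', h3']

theorem stmt_13 (N : ℕ) (hN : 7 ≤ N) :
    ∀ t ∈ Ioo ((Real.sqrt 6 - Real.sqrt 2) / 2) (1 : ℝ),
      ((t ^ 2 / (1 - t ^ 2)) ^ (N : ℝ) + 3 * (t ^ 2 / (1 - t ^ 2))) *
        (1 - t ^ ((N : ℝ) - 2)) ^ 2 > 1 := by
  intro t ht
  obtain ⟨htl, htu⟩ := ht
  have h62 : Real.sqrt 2 ≤ Real.sqrt 6 := Real.sqrt_le_sqrt (by norm_num)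
  have ht0 : (0:ℝ) ≤ (Real.sqrt 6 - Real.sqrt 2) / 2 := by linarith
  have h0 : 0 < t := lt_of_le_of_lt ht0 htl
  have ha : (267949:ℝ)/1000000 < t^2 := by
    have h6 : Real.sqrt 6 ^ 2 = 6 := Real.sq_sqrt (by norm_num)
    have h2 : Real.sqrt 2 ^ 2 = 2 := Real.sq_sqrt (by norm_num)
    have h12 : Real.sqrt 6 * Real.sqrt 2 = Real.sqrt 12 := by
      rw [← Real.sqrt_mul (by norm_num : (0:ℝ) ≤ 6)]; norm_num
    have h12b : Real.sqrt 12 < 3464102/1000000 := by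
      nlinarith [Real.sq_sqrt (show (0:ℝ) ≤ 12 by norm_num), Real.sqrt_nonneg 12]
    have hsq : ((Real.sqrt 6 - Real.sqrt 2)/2)^2 < t^2 := by
      exact pow_lt_pow_left₀ htl ht0 (by norm_num)
    nlinarith [hsq, h6, h2, h12, h12b]
  have e1 : (t^2/(1-t^2)) ^ (N:ℝ) = (t^2/(1-t^2))^N := Real.rpow_natCast _ N
  have e2 : t ^ ((N:ℝ) - 2) = t ^ (N - 2 : ℕ) := by
    have : ((N - 2 : ℕ) : ℝ) = (N:ℝ) - 2 := by
      rw [Nat.cast_sub (by omega)]; norm_num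
    rw [← this, Real.rpow_natCast]
  rw [e1, e2]
  exact core N hN t h0 htu ha
end
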